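/- arXiv:1612.00108 — 2 statements merged into one kernel-verified Lean document; each statement's English description precedes it below -/
import Mathlib

section
/- If for every arm i in the active set X_m the true expected loss satisfies l_i ≤ \bar{l}_i + c_m, and for an optimal arm i* ∈ X_m the expected loss satisfies l^* ≥ \bar{l}_{i*} − c_m, then the estimate \bar{λ}_m = min_{x_i ∈ X_m} (\bar{λ}_i + c_m/x_i) satisfies λ* ≤ \bar{λ}_m ≤ λ* + 2 c_m / x_{i*}. -/
/-- Lemma 2: confidence-interval sandwich for the estimate of λ*. -/
theorem stmt_0 {ι : Type*} [Fintype ι] [Nonempty ι]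
    (x l lbar : ι → ℝ)
    (hx : ∀ i, 0 < x i) (hl : ∀ i, 0 < l i) (hlbar : ∀ i, 0 ≤ lbar i)
    (c : ℝ) (hc : 0 < c)
    (istar : ι) (lamstar : ℝ)
    (hstar : lamstar = l istar / x istar)
    (hmin : ∀ i, lamstar ≤ l i / x i)
    (hub : ∀ i, l i ≤ lbar i + c)
    (hlb : lbar istar - c ≤ l istar) :
    lamstar ≤ (⨅ i, (lbar i / x i + c / x i)) ∧
      (⨅ i, (lbar i / x i + c / x i)) ≤ lamstar + 2 * c / x istar := by
  constructor
  · apply le_ciInf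
    intro i
    calc lamstar ≤ l i / x i := hmin i
      _ ≤ (lbar i + c) / x i := by
          exact div_le_div_of_nonneg_right (hub i) (hx i).le
      _ = lbar i / x i + c / x i := add_div _ _ _
  · calc (⨅ i, (lbar i / x i + c / x i)) ≤ lbar istar / x istar + c / x istar :=
          ciInf_le (Finite.bddBelow_range _) istar
      _ ≤ (l istar + c) / x istar + c / x istar := by
          have : lbar istar ≤ l istar + c := by linarith
          gcongr
          exact (hx istar).le
      _ = lamstar + 2 * c / x istar := by
          rw [hstar]
          field_simp
          ring
end

section
/- For any x ∈ [x_min, x_max], the relative losses satisfy Δ(x) − Δ'(x) ≤ L·(x_max/x_min)·(x_max − x_min)/n, and moreover Δ(x_{k*}) ≤ L·(x_max/x_min)·(x_max − x_min)/n. -/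
/-- Lemma 3 (discretization lemma): Δ(x_{k*}) ≤ L'/n and Δ(x) − Δ'(x) ≤ L'/n
where L' = L · (x_max/x_min) · (x_max − x_min). -/
theorem stmt_1 (xmin xmax L : ℝ) (n : ℕ) (hn : 0 < n)
    (hxmin : 0 < xmin) (hlt : xmin < xmax) (hL : 0 ≤ L)
    (l : ℝ → ℝ)
    (hl0 : ∀ x ∈ Set.Icc xmin xmax, 0 ≤ l x)
    (hlip : ∀ x ∈ Set.Icc xmin xmax, ∀ y ∈ Set.Icc xmin xmax, |l x - l y| ≤ L * |x - y|)
    (xstar : ℝ) (hxstar : xstar ∈ Set.Icc xmin xmax)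
    (lamstar : ℝ) (hlam : lamstar = l xstar / xstar)
    (hopt : ∀ x ∈ Set.Icc xmin xmax, lamstar ≤ l x / x)
    (xk : ℕ → ℝ) (hxk : ∀ k, xk k = xmin + k * (xmax - xmin) / n)
    (kstar : ℕ) (hks : kstar ∈ Finset.Icc 1 n)
    (hkopt : ∀ k ∈ Finset.Icc 1 n, l (xk kstar) / xk kstar ≤ l (xk k) / xk k)
    (j : ℕ) (hj : j ∈ Finset.Icc 1 n)
    (hjx : xstar ≤ xk j) (hjx2 : xk j - xstar ≤ (xmax - xmin) / n) :
    (∀ x ∈ Set.Icc xmin xmax,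
        (l x - x * lamstar) - (l x - x * (l (xk kstar) / xk kstar))
          ≤ L * (xmax / xmin) * (xmax - xmin) / n) ∧
      l (xk kstar) - xk kstar * lamstar ≤ L * (xmax / xmin) * (xmax - xmin) / n := by
  have hnR : (0:ℝ) < n := by exact_mod_cast hn
  set δ : ℝ := (xmax - xmin) / n with hδ
  have hδpos : 0 < δ := div_pos (by linarith) hnR
  -- grid points are in the interval
  have hmem : ∀ k ∈ Finset.Icc 1 n, xk k ∈ Set.Icc xmin xmax := by
    intro k hk
    simp only [Finset.mem_Icc] at hk
    rw [hxk]
    constructor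
    · have h1 : (0:ℝ) ≤ (k:ℝ) * (xmax - xmin) / n :=
        div_nonneg (mul_nonneg (Nat.cast_nonneg k) (by linarith)) (le_of_lt hnR)
      linarith
    · have hk2 : (k:ℝ) ≤ n := by exact_mod_cast hk.2
      have : (k:ℝ) * (xmax - xmin) / n ≤ xmax - xmin := by
        rw [div_le_iff₀ hnR]
        nlinarith
      linarith
  have hjm := hmem j hj
  have hsm := hmem kstar hks
  have hxsp : 0 < xstar := lt_of_lt_of_le hxmin hxstar.1
  have hxjp : 0 < xk j := lt_of_lt_of_le hxmin hjm.1
  have hxsp' : 0 < xk kstar := lt_of_lt_of_le hxmin hsm.1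
  -- Lipschitz bound at x_j
  have hlipj := hlip (xk j) hjm xstar hxstar
  have hlj : l (xk j) ≤ l xstar + L * δ := by
    have habs : |xk j - xstar| = xk j - xstar := abs_of_nonneg (by linarith)
    rw [habs] at hlipj
    have h1 : l (xk j) - l xstar ≤ L * (xk j - xstar) := (abs_le.mp hlipj).2
    have h2 : L * (xk j - xstar) ≤ L * δ := by
      apply mul_le_mul_of_nonneg_left _ hL
      simpa [hδ] using hjx2
    linarith
  -- key bound: λ(x_{k*}) ≤ λ* + Lδ/xmin
  have hlstar0 : 0 ≤ l xstar := hl0 xstar hxstar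
  have hkey : l (xk kstar) / xk kstar ≤ lamstar + L * δ / xmin := by
    have h1 : l (xk kstar) / xk kstar ≤ l (xk j) / xk j := hkopt j hj
    have h2 : l (xk j) / xk j ≤ (l xstar + L * δ) / xk j := by gcongr
    have h3 : (l xstar + L * δ) / xk j = l xstar / xk j + L * δ / xk j := add_div _ _ _
    have h4 : l xstar / xk j ≤ l xstar / xstar := by gcongr
    have h5 : L * δ / xk j ≤ L * δ / xmin := by
      rw [div_le_div_iff₀ hxjp hxmin]
      nlinarith [mul_nonneg hL hδpos.le, hjm.1]
    rw [hlam]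
    linarith
  have hkey0 : 0 ≤ l (xk kstar) / xk kstar - lamstar :=
    sub_nonneg.mpr (hopt _ hsm)
  have hRHS : L * (xmax / xmin) * (xmax - xmin) / n = xmax * (L * δ / xmin) := by
    rw [hδ]; field_simp
  constructor
  · intro x hx
    rw [hRHS]
    have hx0 : 0 ≤ x := le_of_lt (lt_of_lt_of_le hxmin hx.1)
    have heq : (l x - x * lamstar) - (l x - x * (l (xk kstar) / xk kstar))
        = x * (l (xk kstar) / xk kstar - lamstar) := by ring
    rw [heq]
    have h1 : x * (l (xk kstar) / xk kstar - lamstar)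
        ≤ xmax * (l (xk kstar) / xk kstar - lamstar) := by
      apply mul_le_mul_of_nonneg_right hx.2 hkey0
    have h2 : xmax * (l (xk kstar) / xk kstar - lamstar) ≤ xmax * (L * δ / xmin) := by
      apply mul_le_mul_of_nonneg_left (by linarith) (by linarith)
    linarith
  · rw [hRHS]
    have hcancel : l (xk kstar) = xk kstar * (l (xk kstar) / xk kstar) := by
      field_simp
    rw [hcancel]
    have heq : xk kstar * (l (xk kstar) / xk kstar) - xk kstar * lamstar
        = xk kstar * (l (xk kstar) / xk kstar - lamstar) := by ring
    rw [heq]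
    have h1 : xk kstar * (l (xk kstar) / xk kstar - lamstar)
        ≤ xmax * (l (xk kstar) / xk kstar - lamstar) :=
      mul_le_mul_of_nonneg_right hsm.2 hkey0
    have h2 : xmax * (l (xk kstar) / xk kstar - lamstar) ≤ xmax * (L * δ / xmin) :=
      mul_le_mul_of_nonneg_left (by linarith) (by linarith)
    linarith
end
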